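/- If n < k+1, then W_n^(k) contains no square factor, i.e., no nonempty factor of the form UU. -/

import Mathlib

/-!
For `n < k` the word `W k n` is the prefix of length `2 ^ n` of the ruler sequence
`ν₂(1), ν₂(2), ν₂(3), … = 0, 1, 0, 2, 0, 1, 0, 3, …`: the morphism sends a letter `a < k - 1`
to `0 (a + 1)`, which is exactly how the ruler sequence arises from itself
(`r (2 i) = 0`, `r (2 i + 1) = r i + 1`). One more step turns the last letter `k - 1` into the
single letter `k`, so `W k k` is a ruler prefix followed by a letter occurring nowhere else.

The ruler sequence is square-free. A square of odd period `L` compares an even position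
(letter `0`) with an odd one (a positive letter). A square of even period `2 l`, read at its odd
positions, is a square of period `l` one level up, so we conclude by induction on the period.
-/

def kbon (k : ℕ) (n : ℕ) : ℕ :=
  if _h1 : n < k - 1 then 0
  else if _h2 : n = k - 1 then 1
  else ∑ i ∈ Finset.range k, kbon k (n - i - 1)
termination_by n
decreasing_by omega

/-- The k-bonacci morphism on words over ℕ. -/
def phiW (k : ℕ) (w : List ℕ) : List ℕ :=
  w.flatMap (fun a => if a % k = k - 1 then [a + 1] else [k * (a / k), a + 1])

/-- The finite k-bonacci word over the infinite alphabet ℕ. -/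
def W (k n : ℕ) : List ℕ := (phiW k)^[n] [0]

def ruler (i : ℕ) : ℕ := padicValNat 2 (i + 1)

lemma ruler_two_mul (i : ℕ) : ruler (2 * i) = 0 :=
  padicValNat.eq_zero_of_not_dvd (by omega)

lemma ruler_two_mul_add_one (i : ℕ) : ruler (2 * i + 1) = ruler i + 1 := by
  rw [ruler, ruler, show 2 * i + 1 + 1 = 2 * (i + 1) by ring,
    padicValNat.mul two_ne_zero (by omega), padicValNat_self, add_comm]

lemma two_pow_ruler_le (i : ℕ) : 2 ^ ruler i ≤ i + 1 :=
  Nat.le_of_dvd i.succ_pos pow_padicValNat_dvd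

lemma ruler_le_of_lt_two_pow {i n : ℕ} (h : i < 2 ^ n) : ruler i ≤ n :=
  (Nat.pow_le_pow_iff_right one_lt_two).1 ((two_pow_ruler_le i).trans h)

lemma ruler_lt_of_lt_two_pow_sub_one {i n : ℕ} (h : i < 2 ^ n - 1) : ruler i < n :=
  (Nat.pow_lt_pow_iff_right one_lt_two).1 ((two_pow_ruler_le i).trans_lt (by omega))

lemma ruler_two_pow_sub_one (n : ℕ) : ruler (2 ^ n - 1) = n := by
  rw [ruler, Nat.sub_add_cancel Nat.one_le_two_pow, padicValNat.prime_pow]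

theorem ruler_not_periodic {L : ℕ} (hL : 0 < L) (p : ℕ) :
    ¬ ∀ j < L, ruler (p + j) = ruler (p + L + j) := by
  induction L using Nat.strong_induction_on generalizing p with
  | _ L ih =>
  intro h
  obtain ⟨l, rfl | rfl⟩ := Nat.even_or_odd' L
  · -- `p + (2 * j + 1 - p % 2)` runs over the odd positions of the square
    refine ih l (by omega) (by omega) (p / 2) fun j hj => ?_
    have hodd := h (2 * j + 1 - p % 2) (by omega)
    rw [show p + (2 * j + 1 - p % 2) = 2 * (p / 2 + j) + 1 by omega,
      show p + 2 * l + (2 * j + 1 - p % 2) = 2 * (p / 2 + l + j) + 1 by omega,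
      ruler_two_mul_add_one, ruler_two_mul_add_one] at hodd
    exact Nat.add_right_cancel hodd
  · have h0 := h 0 (by omega)
    obtain ⟨q, rfl | rfl⟩ := Nat.even_or_odd' p
    · rw [show 2 * q + (2 * l + 1) + 0 = 2 * (q + l) + 1 by ring, add_zero,
        ruler_two_mul, ruler_two_mul_add_one] at h0
      omega
    · rw [show 2 * q + 1 + (2 * l + 1) + 0 = 2 * (q + l + 1) by ring, add_zero,
        ruler_two_mul, ruler_two_mul_add_one] at h0
      omega

theorem List.exists_getElem?_eq_of_square_infix {α : Type*} {U l : List α}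
    (h : U ++ U <:+: l) :
    ∃ p, p + 2 * U.length ≤ l.length ∧ ∀ j < U.length, l[p + j]? = l[p + U.length + j]? := by
  obtain ⟨p, hlen, hget⟩ := List.infix_iff_getElem?.1 h
  simp only [List.length_append] at hlen hget
  refine ⟨p, by omega, fun j hj => ?_⟩
  rw [show p + j = j + p by omega, show p + U.length + j = (j + U.length) + p by omega,
    hget j (by omega), hget (j + U.length) (by omega)]
  simp [List.getElem_append_left hj, List.getElem_append_right (Nat.le_add_left _ j)]

theorem not_square_infix_map_ruler_range {U : List ℕ} (hU : U ≠ []) (m : ℕ) :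
    ¬ U ++ U <:+: (List.range m).map ruler := by
  intro h
  obtain ⟨p, hlen, hper⟩ := List.exists_getElem?_eq_of_square_infix h
  simp only [List.length_map, List.length_range] at hlen
  refine ruler_not_periodic (List.length_pos_iff.2 hU) p fun j hj => ?_
  simpa [List.getElem?_range (show p + j < m by omega),
    List.getElem?_range (show p + U.length + j < m by omega)] using hper j hj

theorem List.square_infix_of_square_infix_concat {α : Type*} {U v : List α} {x : α}
    (hU : U ≠ []) (hx : x ∉ v) (h : U ++ U <:+: v ++ [x]) : U ++ U <:+: v := by
  refine (List.infix_concat_iff.1 h).resolve_left fun hsuf => ?_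
  obtain ⟨t, hUt, -⟩ := (List.suffix_concat_iff.1 hsuf).resolve_left (by simpa using hU)
  have hxU : x ∈ U := by
    have hx' := List.mem_concat_self (a := x) (xs := t)
    rw [← hUt] at hx'
    simpa using hx'
  classical
  have hcount := hsuf.sublist.count_le x
  simp only [List.count_append, List.count_singleton_self,
    List.count_eq_zero_of_not_mem hx] at hcount
  have := List.count_pos_iff.2 hxU
  omega

lemma List.range_flatMap_pair {α : Type*} (f : ℕ → α) (m : ℕ) :
    (List.range m).flatMap (fun i => [f (2 * i), f (2 * i + 1)]) = (List.range (2 * m)).map f := by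
  induction m with
  | zero => rfl
  | succ m ih =>
    rw [List.range_succ, List.flatMap_append, ih, show 2 * (m + 1) = 2 * m + 1 + 1 by ring,
      List.range_succ, List.range_succ]
    simp

lemma phiW_append (k : ℕ) (l₁ l₂ : List ℕ) : phiW k (l₁ ++ l₂) = phiW k l₁ ++ phiW k l₂ :=
  List.flatMap_append

lemma phiW_map_ruler_range {k m : ℕ} (h : ∀ i < m, ruler i + 1 < k) :
    phiW k ((List.range m).map ruler) = (List.range (2 * m)).map ruler := by
  rw [← List.range_flatMap_pair, phiW, List.flatMap_map]
  refine List.flatMap_congr fun i hi => ?_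
  have hi := h i (List.mem_range.1 hi)
  rw [if_neg (by rw [Nat.mod_eq_of_lt (by omega)]; omega), Nat.div_eq_of_lt (by omega),
    ruler_two_mul, ruler_two_mul_add_one, mul_zero]

lemma W_succ (k n : ℕ) : W k (n + 1) = phiW k (W k n) :=
  Function.iterate_succ_apply' _ _ _

theorem W_eq_map_ruler_range {k n : ℕ} (hn : n ≤ k - 1) :
    W k n = (List.range (2 ^ n)).map ruler := by
  induction n with
  | zero => simp [W, ruler]
  | succ n ih =>
    rw [W_succ, ih (by omega), phiW_map_ruler_range, pow_succ']
    exact fun i hi => by have := ruler_le_of_lt_two_pow hi; omega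

theorem W_self {k : ℕ} (hk : 0 < k) : W k k = (List.range (2 ^ k - 2)).map ruler ++ [k] := by
  obtain ⟨m, rfl⟩ : ∃ m, k = m + 1 := ⟨k - 1, by omega⟩
  have hsplit : 2 ^ m = (2 ^ m - 1) + 1 := (Nat.sub_add_cancel Nat.one_le_two_pow).symm
  rw [W_succ, W_eq_map_ruler_range (by omega : m ≤ m + 1 - 1), hsplit, List.range_succ,
    List.map_append, phiW_append, phiW_map_ruler_range fun i hi => by
      have := ruler_lt_of_lt_two_pow_sub_one hi; omega,
    show 2 ^ (m + 1) - 2 = 2 * (2 ^ m - 1) by rw [pow_succ]; omega]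
  simp [phiW, ruler_two_pow_sub_one]

theorem no_square_small_general (k n : ℕ) (hn : n < k + 1) :
    ∀ U : List ℕ, U ≠ [] → ¬ (U ++ U) <:+: W k n := by
  intro U hU hsq
  rcases le_or_gt n (k - 1) with hle | hgt
  · rw [W_eq_map_ruler_range hle] at hsq
    exact not_square_infix_map_ruler_range hU _ hsq
  obtain rfl : n = k := by omega
  rw [W_self (by omega)] at hsq
  have hfresh : n ∉ (List.range (2 ^ n - 2)).map ruler := by
    simp only [List.mem_map, List.mem_range, not_exists, not_and]
    exact fun i hi => (ruler_lt_of_lt_two_pow_sub_one (by omega)).ne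
  exact not_square_infix_map_ruler_range hU _
    (List.square_infix_of_square_infix_concat hU hfresh hsq)

theorem no_square_small (k n : ℕ) (hk : 2 < k) (hn : n < k + 1) :
    ∀ U : List ℕ, U ≠ [] → ¬ (U ++ U) <:+: W k n :=
  no_square_small_general k n hn
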